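/- arXiv:2012.01418 — 2 statements merged into one kernel-verified Lean document; each statement's English description precedes it below -/
import Mathlib

section
/- (Theorem 1 of the paper.) Define, for each t ∈ {1,…,T}, each count vector m with ∑_a m(a) = n, and each prescription γ : 𝒳 → 𝒰: the cost ℓ̂_t(m, γ) := (1/|H(m)|) ∑_{x ∈ H(m)} ℓ_t(x, (γ(x^1),…,γ(x^n))), and the transition kernel T̂_t(m, γ), the law of emp(i ↦ f_t(x0 i, γ(x0 i), W i, m)) for any fixed x0 ∈ H(m) with W : Fin n → 𝒲 i.i.d. with PMF P_{W_t} (this law is independent of the choice of x0 ∈ H(m)). Define value functions by V_{T+1}(m) := 0 and, for t = T,…,1, V_t(m) := min over γ : 𝒳 → 𝒰 of [ℓ̂_t(m, γ) + ∑_{m'} T̂_t(m, γ)(m') · V_{t+1}(m')]. Then: (i) for every coordination strategy ψ, the expected total cost Ĵ(ψ) = E[∑_{t=1}^T ℓ_t(X_t, (Γ_t(X_t^1),…,Γ_t(X_t^n)))] satisfies Ĵ(ψ) ≥ ∑_m P(Z_1 = m) V_1(m); and (ii) any Markov strategy ψ* with ψ*_t depending only on z_t and ψ*_t(z_t) attaining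 the minimum in the definition of V_t(z_t) achieves Ĵ(ψ*) = ∑_m P(Z_1 = m) V_1(m). Hence there is no loss of optimality in restricting attention to Markov coordination strategies Γ_t = ψ_t(Z_t). -/
/-!
Relabelling the subsystems by a permutation leaves the i.i.d. initial law, the i.i.d. noise and
the closed-loop dynamics invariant, so the law of the trajectory is exchangeable while the
mean-field history is unchanged. Hence, given the mean-field history, the current profile is
uniform on `H(Z_t)`: the expected step cost equals `E[ℓ̂_t(Z_t, Γ_t)]`, and `Z_{t+1}` has
conditional law `T̂_t(Z_t, Γ_t)` (independent of the representative, again by relabelling).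
Telescoping the value functions along the closed loop gives
`Ĵ(ψ) = E[V_1(Z_1)] + ∑_t E[Q_t(Z_t, Γ_t) - V_t(Z_t)]`, where `Q_t` (`actionValue`) is the
quantity minimised in the dynamic program. Every summand is nonnegative because `V_t` is the
minimum of `Q_t`, and vanishes for a strategy attaining that minimum.
-/

open scoped ENNReal

def emp {X : Type*} [DecidableEq X] {n : ℕ} (x : Fin n → X) : X → ℕ :=
  fun a => (Finset.univ.filter (fun i => x i = a)).card

def Hset {X : Type*} [Fintype X] [DecidableEq X] (n : ℕ) (m : X → ℕ) : Finset (Fin n → X) :=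
  Finset.univ.filter (fun x => emp x = m)

noncomputable def iid {W : Type*} [Fintype W] (n : ℕ) (ν : PMF W) : PMF (Fin n → W) :=
  PMF.ofFintype (fun w => ∏ i, ν (w i)) (by
    have h : ∑ j : W, ν j = 1 := by rw [← tsum_fintype (L := SummationFilter.unconditional _)]; exact ν.tsum_coe
    rw [← Fintype.prod_sum]; simp [h])

variable {X U W : Type*} [Fintype X] [DecidableEq X] [Nonempty X]
  [Fintype U] [Nonempty U] [Fintype W]

/-- Closed-loop law of the state trajectory `(X_0, …, X_t)` under coordination strategy `ψ`. -/
noncomputable def hist (n : ℕ) (PX : PMF X) (PW : ℕ → PMF W)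
    (f : ℕ → X → U → W → (X → ℕ) → X)
    (ψ : (t : ℕ) → (Fin (t + 1) → (X → ℕ)) → X → U) :
    (t : ℕ) → PMF (Fin (t + 1) → (Fin n → X))
  | 0 => (iid n PX).map (fun x _ => x)
  | t + 1 =>
    (hist n PX PW f ψ t).bind (fun xs =>
      (iid n (PW t)).map (fun w =>
        Fin.snoc xs (fun i =>
          f t (xs (Fin.last t) i)
            (ψ t (fun s => emp (xs s)) (xs (Fin.last t) i))
            (w i) (emp (xs (Fin.last t))))))

/-- The (finite) space of achievable mean fields: empirical count vectors of `n` subsystems. -/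
def Mspace (X : Type*) [Fintype X] [DecidableEq X] (n : ℕ) : Finset (X → ℕ) :=
  Finset.univ.image (fun x : Fin n → X => emp x)

/-- `ℓ̂_t(m, γ)`: average of the per-step cost over the uniform distribution on `H(m)`. -/
noncomputable def lhat (n : ℕ) (ℓ : ℕ → (Fin n → X) → (Fin n → U) → ℝ)
    (t : ℕ) (m : X → ℕ) (γ : X → U) : ℝ :=
  (∑ x ∈ Hset n m, ℓ t x (fun i => γ (x i))) / ((Hset n m).card : ℝ)

/-- `T̂_t(m, γ)(m')`: the mean-field transition kernel, i.e. the probability (under i.i.d.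
noise) that the next empirical count vector is `m'`, averaged over representatives in `H(m)`
(the averaging is immaterial: the value is the same for every representative). -/
noncomputable def That (n : ℕ) (PW : ℕ → PMF W) (f : ℕ → X → U → W → (X → ℕ) → X)
    (t : ℕ) (m : X → ℕ) (γ : X → U) (m' : X → ℕ) : ℝ≥0∞ :=
  (∑ x0 ∈ Hset n m,
    ∑ w ∈ Finset.univ.filter
      (fun w : Fin n → W => emp (fun i => f t (x0 i) (γ (x0 i)) (w i) m) = m'),
      iid n (PW t) w) / ((Hset n m).card : ℝ≥0∞)

/-- The dynamic-programming value functions `V_t`, with `V_T ≡ 0`. -/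
noncomputable def V (n T : ℕ) (PW : ℕ → PMF W) (f : ℕ → X → U → W → (X → ℕ) → X)
    (ℓ : ℕ → (Fin n → X) → (Fin n → U) → ℝ) (t : ℕ) : (X → ℕ) → ℝ :=
  if t < T then fun m =>
    Finset.univ.inf' Finset.univ_nonempty (fun γ : X → U =>
      lhat n ℓ t m γ +
        ∑ m' ∈ Mspace X n, (That n PW f t m γ m').toReal * V n T PW f ℓ (t + 1) m')
  else fun _ => 0
termination_by T - t

/-- Expected total cost of a coordination strategy over horizon `T`. -/
noncomputable def Jhat (n T : ℕ) (PX : PMF X) (PW : ℕ → PMF W)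
    (f : ℕ → X → U → W → (X → ℕ) → X) (ℓ : ℕ → (Fin n → X) → (Fin n → U) → ℝ)
    (ψ : (t : ℕ) → (Fin (t + 1) → (X → ℕ)) → X → U) : ℝ :=
  ∑ t ∈ Finset.range T, ∑ xs : Fin (t + 1) → (Fin n → X),
    (hist n PX PW f ψ t xs).toReal *
      ℓ t (xs (Fin.last t)) (fun i => ψ t (fun s => emp (xs s)) (xs (Fin.last t) i))

open Finset
open scoped Nat

namespace PMF

variable {α β : Type*} [Fintype α]

def expect (p : PMF α) (g : α → ℝ) : ℝ := ∑ a, (p a).toReal * g a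

lemma expect_congr (p : PMF α) {g h : α → ℝ} (hgh : ∀ a, g a = h a) :
    p.expect g = p.expect h := by
  simp only [expect, hgh]

lemma expect_add (p : PMF α) (g h : α → ℝ) :
    p.expect (fun a => g a + h a) = p.expect g + p.expect h := by
  simp only [expect, mul_add, sum_add_distrib]

lemma expect_sub (p : PMF α) (g h : α → ℝ) :
    p.expect (fun a => g a - h a) = p.expect g - p.expect h := by
  simp only [expect, mul_sub, sum_sub_distrib]

lemma expect_div_const (p : PMF α) (g : α → ℝ) (c : ℝ) :
    p.expect (fun a => g a / c) = p.expect g / c := by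
  simp only [expect, mul_div_assoc', sum_div]

lemma expect_finset_sum {ι : Type*} (s : Finset ι) (p : PMF α) (g : ι → α → ℝ) :
    p.expect (fun a => ∑ i ∈ s, g i a) = ∑ i ∈ s, p.expect (g i) := by
  simp only [expect, mul_sum]
  exact sum_comm

lemma expect_nonneg (p : PMF α) {g : α → ℝ} (hg : ∀ a, 0 ≤ g a) : 0 ≤ p.expect g :=
  sum_nonneg fun a _ => mul_nonneg ENNReal.toReal_nonneg (hg a)

lemma expect_pure [DecidableEq α] (a : α) (g : α → ℝ) : (pure a).expect g = g a := by
  simp [expect, pure_apply, apply_ite ENNReal.toReal]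

lemma expect_bind [Fintype β] (p : PMF α) (q : α → PMF β) (g : β → ℝ) :
    (p.bind q).expect g = p.expect fun a => (q a).expect g := by
  have hbind : ∀ b, ((p.bind q) b).toReal = ∑ a, (p a).toReal * (q a b).toReal := fun b => by
    rw [bind_apply, tsum_fintype, ENNReal.toReal_sum fun a _ =>
      ENNReal.mul_ne_top (p.apply_ne_top a) ((q a).apply_ne_top b)]
    simp only [ENNReal.toReal_mul]
  simp only [expect, hbind, sum_mul, mul_sum, mul_assoc]
  exact sum_comm

lemma expect_map [Fintype β] (p : PMF α) (h : α → β) (g : β → ℝ) :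
    (p.map h).expect g = p.expect (g ∘ h) := by
  classical
  rw [← bind_pure_comp, expect_bind]
  exact p.expect_congr fun a => expect_pure _ _

lemma expect_comp_eq_sum_fiber [DecidableEq β] (p : PMF α) {h : α → β} {s : Finset β}
    (hs : ∀ a, h a ∈ s) (g : β → ℝ) :
    p.expect (fun a => g (h a)) = ∑ b ∈ s, (∑ a with h a = b, p a).toReal * g b := by
  rw [expect, ← sum_fiberwise_of_maps_to (fun a _ => hs a)]
  refine sum_congr rfl fun b _ => ?_
  rw [ENNReal.toReal_sum fun a _ => p.apply_ne_top a, sum_mul]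
  exact sum_congr rfl fun a ha => by rw [(mem_filter.1 ha).2]

lemma map_equiv_apply (p : PMF α) (e : α ≃ β) (b : β) : p.map e b = p (e.symm b) := by
  rw [map_apply, tsum_fintype, sum_eq_single (e.symm b)]
  · simp
  · intro a _ ha
    rw [if_neg]
    rintro rfl
    exact ha (e.symm_apply_apply a).symm
  · simp

lemma expect_zero (p : PMF α) : p.expect (fun _ => 0) = 0 := by
  simp [expect]

lemma expect_eq_expect_average {ι : Type*} [Fintype ι] [Nonempty ι] (p : PMF α)
    (e : ι → α → α) (he : ∀ i, p.map (e i) = p) (g : α → ℝ) :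
    p.expect g = p.expect fun a => (∑ i, g (e i a)) / Fintype.card ι := by
  have hinv : ∀ i, p.expect (fun a => g (e i a)) = p.expect g := fun i => by
    conv_rhs => rw [← he i, expect_map]
    rfl
  rw [expect_div_const, expect_finset_sum, sum_congr rfl fun i _ => hinv i, sum_const,
    card_univ, nsmul_eq_mul, mul_div_cancel_left₀ _ (Nat.cast_ne_zero.2 Fintype.card_ne_zero)]

end PMF

section Relabel

variable {α : Type*} {n : ℕ}

def relabel (σ : Equiv.Perm (Fin n)) : (Fin n → α) ≃ (Fin n → α) where
  toFun x := x ∘ σ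
  invFun x := x ∘ σ.symm
  left_inv x := by ext; simp
  right_inv x := by ext; simp

@[simp]
lemma relabel_apply (σ : Equiv.Perm (Fin n)) (x : Fin n → α) (i : Fin n) :
    relabel σ x i = x (σ i) := rfl

lemma relabel_mul (σ τ : Equiv.Perm (Fin n)) (x : Fin n → α) :
    relabel (σ * τ) x = relabel τ (relabel σ x) := rfl

variable [DecidableEq α]

@[simp]
lemma emp_relabel (σ : Equiv.Perm (Fin n)) (x : Fin n → α) : emp (relabel σ x) = emp x := by
  ext a
  refine card_equiv σ fun i => ?_
  rw [mem_filter, mem_filter, relabel_apply]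
  simp

lemma exists_relabel_eq_of_emp_eq {x y : Fin n → α} (h : emp x = emp y) :
    ∃ σ : Equiv.Perm (Fin n), relabel σ x = y := by
  have hcard : ∀ a, Fintype.card {i // y i = a} = Fintype.card {i // x i = a} := fun a => by
    simpa [Fintype.card_subtype, emp] using (congrFun h a).symm
  let e a : {i // y i = a} ≃ {i // x i = a} := Fintype.equivOfCardEq (hcard a)
  refine ⟨(Equiv.sigmaFiberEquiv y).symm.trans
    ((Equiv.sigmaCongrRight e).trans (Equiv.sigmaFiberEquiv x)), funext fun i => ?_⟩
  exact (e (y i) ⟨i, rfl⟩).2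

lemma mem_Hset_emp_iff [Fintype α] {x y : Fin n → α} :
    y ∈ Hset n (emp x) ↔ ∃ σ : Equiv.Perm (Fin n), relabel σ x = y := by
  refine ⟨fun hy => exists_relabel_eq_of_emp_eq (mem_filter.1 hy).2.symm, ?_⟩
  rintro ⟨σ, rfl⟩
  simp [Hset]

lemma card_relabel_eq_card_stabilizer [Fintype α] {x y : Fin n → α} (hy : y ∈ Hset n (emp x)) :
    #{σ | relabel σ x = y} = #{σ : Equiv.Perm (Fin n) | relabel σ x = x} := by
  obtain ⟨τ, rfl⟩ := mem_Hset_emp_iff.1 hy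
  refine (card_equiv (Equiv.mulRight τ) fun σ => ?_).symm
  simp only [mem_filter, mem_univ, true_and, Equiv.coe_mulRight, relabel_mul]
  exact (relabel τ).injective.eq_iff.symm

lemma sum_relabel_div_factorial [Fintype α] (x : Fin n → α) (F : (Fin n → α) → ℝ) :
    (∑ σ : Equiv.Perm (Fin n), F (relabel σ x)) / n ! =
      (∑ y ∈ Hset n (emp x), F y) / #(Hset n (emp x)) := by
  set c := #{σ : Equiv.Perm (Fin n) | relabel σ x = x}
  have hmaps : ∀ σ : Equiv.Perm (Fin n), relabel σ x ∈ Hset n (emp x) :=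
    fun σ => mem_Hset_emp_iff.2 ⟨σ, rfl⟩
  have hsum : ∑ σ : Equiv.Perm (Fin n), F (relabel σ x) = c * ∑ y ∈ Hset n (emp x), F y := by
    rw [← sum_fiberwise_of_maps_to (fun σ _ => hmaps σ), mul_sum]
    refine sum_congr rfl fun y hy => ?_
    rw [sum_congr rfl fun σ hσ => by rw [(mem_filter.1 hσ).2], sum_const,
      card_relabel_eq_card_stabilizer hy, nsmul_eq_mul]
  have hcard : n ! = c * #(Hset n (emp x)) := by
    have hperm : Fintype.card (Equiv.Perm (Fin n)) = n ! := by
      rw [Fintype.card_perm, Fintype.card_fin]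
    rw [← hperm, ← card_univ,
      card_eq_sum_card_fiberwise fun σ _ => hmaps σ,
      sum_congr rfl fun y hy => card_relabel_eq_card_stabilizer hy, sum_const, smul_eq_mul,
      mul_comm]
  have hc : (c : ℝ) ≠ 0 := Nat.cast_ne_zero.2 (card_ne_zero.2 ⟨1, mem_filter.2 ⟨mem_univ _, rfl⟩⟩)
  rw [hsum, hcard, Nat.cast_mul, mul_div_mul_left _ _ hc]

end Relabel

section Noise

variable {E : Type*} [Fintype E] {n : ℕ}

lemma iid_relabel (ν : PMF E) (σ : Equiv.Perm (Fin n)) (w : Fin n → E) :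
    iid n ν (relabel σ w) = iid n ν w :=
  Equiv.prod_comp σ fun i => ν (w i)

lemma map_relabel_iid (ν : PMF E) (σ : Equiv.Perm (Fin n)) :
    (iid n ν).map (relabel σ) = iid n ν := by
  ext w
  rw [PMF.map_equiv_apply, ← iid_relabel ν σ, Equiv.apply_symm_apply]

variable {α β : Type*} [Fintype β] [DecidableEq β]

lemma sum_iid_emp_relabel (ν : PMF E) (step : α → E → β) (x : Fin n → α)
    (σ : Equiv.Perm (Fin n)) (m' : β → ℕ) :
    ∑ w with emp (fun i => step (relabel σ x i) (w i)) = m', iid n ν w =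
      ∑ w with emp (fun i => step (x i) (w i)) = m', iid n ν w := by
  rw [sum_filter, sum_filter]
  refine Fintype.sum_equiv (relabel σ).symm _ _ fun w => ?_
  set v := (relabel σ).symm w
  have hw : w = relabel σ v := ((relabel σ).apply_symm_apply w).symm
  rw [hw, iid_relabel, ← emp_relabel σ fun i => step (x i) (v i)]
  rfl

lemma sum_iid_emp_eq_of_emp_eq [DecidableEq α] (ν : PMF E) (step : α → E → β) {x y : Fin n → α}
    (h : emp x = emp y) (m' : β → ℕ) :
    ∑ w with emp (fun i => step (y i) (w i)) = m', iid n ν w =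
      ∑ w with emp (fun i => step (x i) (w i)) = m', iid n ν w := by
  obtain ⟨σ, rfl⟩ := exists_relabel_eq_of_emp_eq h
  exact sum_iid_emp_relabel ν step x σ m'

end Noise

section Model

variable {𝒳 𝒰 𝒲 : Type*} [DecidableEq 𝒳] {n : ℕ}

def nextState (f : ℕ → 𝒳 → 𝒰 → 𝒲 → (𝒳 → ℕ) → 𝒳)
    (ψ : (t : ℕ) → (Fin (t + 1) → (𝒳 → ℕ)) → 𝒳 → 𝒰) (t : ℕ)
    (xs : Fin (t + 1) → Fin n → 𝒳) (w : Fin n → 𝒲) : Fin n → 𝒳 :=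
  fun i => f t (xs (Fin.last t) i) (ψ t (fun s => emp (xs s)) (xs (Fin.last t) i)) (w i)
    (emp (xs (Fin.last t)))

lemma nextState_relabel (f : ℕ → 𝒳 → 𝒰 → 𝒲 → (𝒳 → ℕ) → 𝒳)
    (ψ : (t : ℕ) → (Fin (t + 1) → (𝒳 → ℕ)) → 𝒳 → 𝒰) (t : ℕ) (σ : Equiv.Perm (Fin n))
    (xs : Fin (t + 1) → Fin n → 𝒳) (w : Fin n → 𝒲) :
    nextState f ψ t (relabel σ ∘ xs) (relabel σ w) = relabel σ (nextState f ψ t xs w) := by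
  ext i
  simp [nextState]

variable [Fintype 𝒳] [Fintype 𝒲]

lemma sum_iid_eq_That (PW : ℕ → PMF 𝒲) (f : ℕ → 𝒳 → 𝒰 → 𝒲 → (𝒳 → ℕ) → 𝒳) (t : ℕ)
    {m : 𝒳 → ℕ} (γ : 𝒳 → 𝒰) (m' : 𝒳 → ℕ) {x0 : Fin n → 𝒳} (hx0 : x0 ∈ Hset n m) :
    ∑ w with emp (fun i => f t (x0 i) (γ (x0 i)) (w i) m) = m', iid n (PW t) w =
      That n PW f t m γ m' := by
  have hconst : ∀ x ∈ Hset n m,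
      ∑ w with emp (fun i => f t (x i) (γ (x i)) (w i) m) = m', iid n (PW t) w =
        ∑ w with emp (fun i => f t (x0 i) (γ (x0 i)) (w i) m) = m', iid n (PW t) w :=
    fun x hx => sum_iid_emp_eq_of_emp_eq (PW t) (fun a w => f t a (γ a) w m)
      ((mem_filter.1 hx0).2.trans (mem_filter.1 hx).2.symm) m'
  rw [That, sum_congr rfl hconst, sum_const, nsmul_eq_mul, mul_comm,
    ENNReal.mul_div_cancel_right (Nat.cast_ne_zero.2 (card_ne_zero_of_mem hx0))
      (ENNReal.natCast_ne_top _)]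

variable (PX : PMF 𝒳) (PW : ℕ → PMF 𝒲) (f : ℕ → 𝒳 → 𝒰 → 𝒲 → (𝒳 → ℕ) → 𝒳)
  (ψ : (t : ℕ) → (Fin (t + 1) → (𝒳 → ℕ)) → 𝒳 → 𝒰)

lemma hist_zero : hist n PX PW f ψ 0 = (iid n PX).map fun x _ => x := rfl

lemma hist_succ (t : ℕ) :
    hist n PX PW f ψ (t + 1) = (hist n PX PW f ψ t).bind fun xs =>
      (iid n (PW t)).map fun w => Fin.snoc xs (nextState f ψ t xs w) := rfl

lemma map_relabel_hist (σ : Equiv.Perm (Fin n)) (t : ℕ) :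
    (hist n PX PW f ψ t).map (relabel σ ∘ ·) = hist n PX PW f ψ t := by
  induction t with
  | zero =>
    rw [hist_zero]
    calc ((iid n PX).map fun x _ => x).map (relabel σ ∘ ·)
        = ((iid n PX).map (relabel σ)).map fun x _ => x := by simp only [PMF.map_comp]; rfl
      _ = _ := by rw [map_relabel_iid]
  | succ t ih =>
    set K : (Fin (t + 1) → Fin n → 𝒳) → PMF (Fin (t + 2) → Fin n → 𝒳) := fun xs =>
      (iid n (PW t)).map fun w => Fin.snoc xs (nextState f ψ t xs w)
    have hK : ∀ xs, (K xs).map (relabel σ ∘ ·) = K (relabel σ ∘ xs) := fun xs => by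
      simp only [K, PMF.map_comp]
      conv_rhs => rw [← map_relabel_iid (PW t) σ, PMF.map_comp]
      congr 1
      ext w : 1
      simp only [Function.comp_apply, Fin.comp_snoc, nextState_relabel]
    rw [hist_succ, PMF.map_bind]
    calc _ = (hist n PX PW f ψ t).bind (K ∘ (relabel σ ∘ ·)) := congrArg _ (funext hK)
      _ = _ := by rw [← PMF.bind_map, ih]

lemma expect_hist_zero (F : (𝒳 → ℕ) → ℝ) :
    (hist n PX PW f ψ 0).expect (fun xs => F (emp (xs (Fin.last 0)))) =
      ∑ m ∈ Mspace 𝒳 n, (∑ x ∈ Hset n m, iid n PX x).toReal * F m := by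
  rw [hist_zero, PMF.expect_map]
  exact PMF.expect_comp_eq_sum_fiber _ (fun x => mem_image_of_mem _ (mem_univ x)) F

lemma expect_hist_cost (ℓ : ℕ → (Fin n → 𝒳) → (Fin n → 𝒰) → ℝ) (t : ℕ) :
    (hist n PX PW f ψ t).expect
        (fun xs => ℓ t (xs (Fin.last t)) (fun i => ψ t (fun s => emp (xs s)) (xs (Fin.last t) i))) =
      (hist n PX PW f ψ t).expect
        (fun xs => lhat n ℓ t (emp (xs (Fin.last t))) (ψ t (fun s => emp (xs s)))) := by
  rw [PMF.expect_eq_expect_average _ (fun σ xs => relabel σ ∘ xs)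
    (fun σ => map_relabel_hist PX PW f ψ σ t)]
  refine PMF.expect_congr _ fun xs => ?_
  simp only [Function.comp_apply, emp_relabel, Fintype.card_perm, Fintype.card_fin]
  exact sum_relabel_div_factorial (xs (Fin.last t)) fun y => ℓ t y fun i => ψ t _ (y i)

lemma expect_hist_succ (t : ℕ) (F : (𝒳 → ℕ) → ℝ) :
    (hist n PX PW f ψ (t + 1)).expect (fun xs => F (emp (xs (Fin.last (t + 1))))) =
      (hist n PX PW f ψ t).expect fun xs => ∑ m' ∈ Mspace 𝒳 n,
        (That n PW f t (emp (xs (Fin.last t))) (ψ t (fun s => emp (xs s))) m').toReal * F m' := by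
  rw [hist_succ, PMF.expect_bind]
  refine PMF.expect_congr _ fun xs => ?_
  rw [PMF.expect_map]
  simp only [Function.comp_def, Fin.snoc_last]
  rw [PMF.expect_comp_eq_sum_fiber _ (fun w => mem_image_of_mem _ (mem_univ _)) F]
  exact sum_congr rfl fun m' _ => by
    rw [← sum_iid_eq_That PW f t _ m' (mem_filter.2 ⟨mem_univ _, rfl⟩)]
    rfl

end Model

section DynamicProgramming

variable {𝒳 𝒰 𝒲 : Type*} [Fintype 𝒳] [DecidableEq 𝒳] [Fintype 𝒰] [Nonempty 𝒰] [Fintype 𝒲]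

noncomputable def actionValue (n T : ℕ) (PW : ℕ → PMF 𝒲) (f : ℕ → 𝒳 → 𝒰 → 𝒲 → (𝒳 → ℕ) → 𝒳)
    (ℓ : ℕ → (Fin n → 𝒳) → (Fin n → 𝒰) → ℝ) (t : ℕ) (m : 𝒳 → ℕ) (γ : 𝒳 → 𝒰) : ℝ :=
  lhat n ℓ t m γ + ∑ m' ∈ Mspace 𝒳 n, (That n PW f t m γ m').toReal * V n T PW f ℓ (t + 1) m'

variable {n T : ℕ} (PX : PMF 𝒳) (PW : ℕ → PMF 𝒲) (f : ℕ → 𝒳 → 𝒰 → 𝒲 → (𝒳 → ℕ) → 𝒳)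
  (ℓ : ℕ → (Fin n → 𝒳) → (Fin n → 𝒰) → ℝ)

lemma V_le_actionValue {t : ℕ} (ht : t < T) (m : 𝒳 → ℕ) (γ : 𝒳 → 𝒰) :
    V n T PW f ℓ t m ≤ actionValue n T PW f ℓ t m γ := by
  rw [V, if_pos ht]
  exact inf'_le _ (mem_univ γ)

lemma V_of_le {t : ℕ} (ht : T ≤ t) (m : 𝒳 → ℕ) : V n T PW f ℓ t m = 0 := by
  rw [V, if_neg ht.not_gt]

variable (ψ : (t : ℕ) → (Fin (t + 1) → (𝒳 → ℕ)) → 𝒳 → 𝒰)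

lemma expect_hist_cost_add_expect_V_succ (t : ℕ) :
    (hist n PX PW f ψ t).expect
        (fun xs => ℓ t (xs (Fin.last t)) (fun i => ψ t (fun s => emp (xs s)) (xs (Fin.last t) i))) +
      (hist n PX PW f ψ (t + 1)).expect
        (fun xs => V n T PW f ℓ (t + 1) (emp (xs (Fin.last (t + 1))))) =
      (hist n PX PW f ψ t).expect fun xs =>
        actionValue n T PW f ℓ t (emp (xs (Fin.last t))) (ψ t (fun s => emp (xs s))) := by
  rw [expect_hist_cost, expect_hist_succ, ← PMF.expect_add]
  rfl

lemma Jhat_eq_expect_V_add_sum_advantage :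
    Jhat n T PX PW f ℓ ψ =
      (hist n PX PW f ψ 0).expect (fun xs => V n T PW f ℓ 0 (emp (xs (Fin.last 0)))) +
        ∑ t ∈ range T, (hist n PX PW f ψ t).expect fun xs =>
          actionValue n T PW f ℓ t (emp (xs (Fin.last t))) (ψ t (fun s => emp (xs s))) -
            V n T PW f ℓ t (emp (xs (Fin.last t))) := by
  set a : ℕ → ℝ := fun t =>
    (hist n PX PW f ψ t).expect (fun xs => V n T PW f ℓ t (emp (xs (Fin.last t))))
  have haT : a T = 0 := by
    simp only [a, V_of_le PW f ℓ le_rfl, PMF.expect_zero]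
  have hterm : ∀ t, (hist n PX PW f ψ t).expect (fun xs =>
      actionValue n T PW f ℓ t (emp (xs (Fin.last t))) (ψ t (fun s => emp (xs s))) -
        V n T PW f ℓ t (emp (xs (Fin.last t)))) =
      (hist n PX PW f ψ t).expect (fun xs =>
        ℓ t (xs (Fin.last t)) (fun i => ψ t (fun s => emp (xs s)) (xs (Fin.last t) i))) +
      (a (t + 1) - a t) := fun t => by
    rw [PMF.expect_sub, ← expect_hist_cost_add_expect_V_succ]
    ring
  rw [sum_congr rfl fun t _ => hterm t, sum_add_distrib, sum_range_sub, haT]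
  simp only [a, Jhat, PMF.expect]
  ring

end DynamicProgramming

theorem stmt7_general (n T : ℕ) (PX : PMF X) (PW : ℕ → PMF W)
    (f : ℕ → X → U → W → (X → ℕ) → X) (ℓ : ℕ → (Fin n → X) → (Fin n → U) → ℝ) :
    (∀ (t : ℕ) (m : X → ℕ), (∑ a, m a) = n → ∀ (γ : X → U) (m' : X → ℕ),
      ∀ x0 ∈ Hset n m,
        (∑ w ∈ Finset.univ.filter
          (fun w : Fin n → W => emp (fun i => f t (x0 i) (γ (x0 i)) (w i) m) = m'),
          iid n (PW t) w) = That n PW f t m γ m') ∧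
    (∀ ψ : (t : ℕ) → (Fin (t + 1) → (X → ℕ)) → X → U,
      (∑ m ∈ Mspace X n, (∑ x ∈ Hset n m, iid n PX x).toReal * V n T PW f ℓ 0 m)
        ≤ Jhat n T PX PW f ℓ ψ) ∧
    (∀ ψstar : ℕ → (X → ℕ) → X → U,
      (∀ t < T, ∀ m ∈ Mspace X n,
        V n T PW f ℓ t m = lhat n ℓ t m (ψstar t m) +
          ∑ m' ∈ Mspace X n,
            (That n PW f t m (ψstar t m) m').toReal * V n T PW f ℓ (t + 1) m') →
      Jhat n T PX PW f ℓ (fun t zs => ψstar t (zs (Fin.last t)))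
        = ∑ m ∈ Mspace X n, (∑ x ∈ Hset n m, iid n PX x).toReal * V n T PW f ℓ 0 m) := by
  refine ⟨fun t m _ γ m' x0 hx0 => sum_iid_eq_That PW f t γ m' hx0, fun ψ => ?_,
    fun ψstar hopt => ?_⟩
  · rw [Jhat_eq_expect_V_add_sum_advantage, expect_hist_zero]
    refine le_add_of_nonneg_right (sum_nonneg fun t ht => PMF.expect_nonneg _ fun xs => ?_)
    exact sub_nonneg.2 (V_le_actionValue PW f ℓ (mem_range.1 ht) _ _)
  · rw [Jhat_eq_expect_V_add_sum_advantage, expect_hist_zero, add_eq_left]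
    refine sum_eq_zero fun t ht => ?_
    exact (PMF.expect_congr _ fun xs => sub_eq_zero.2 (hopt t (mem_range.1 ht) _
      (mem_image_of_mem _ (mem_univ _))).symm).trans (PMF.expect_zero _)

/-- Theorem 1: (0) the mean-field kernel does not depend on the representative `x0 ∈ H(m)`;
(i) every coordination strategy has expected cost at least `∑_m P(Z_1 = m) V_1(m)`; and
(ii) any Markov strategy attaining the minimum in the dynamic program achieves this bound,
so there is no loss of optimality in Markov coordination strategies `Γ_t = ψ_t(Z_t)`. -/
theorem stmt7 (n T : ℕ) (hn : 1 ≤ n) (PX : PMF X) (PW : ℕ → PMF W)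
    (f : ℕ → X → U → W → (X → ℕ) → X) (ℓ : ℕ → (Fin n → X) → (Fin n → U) → ℝ) :
    (∀ (t : ℕ) (m : X → ℕ), (∑ a, m a) = n → ∀ (γ : X → U) (m' : X → ℕ),
      ∀ x0 ∈ Hset n m,
        (∑ w ∈ Finset.univ.filter
          (fun w : Fin n → W => emp (fun i => f t (x0 i) (γ (x0 i)) (w i) m) = m'),
          iid n (PW t) w) = That n PW f t m γ m') ∧
    (∀ ψ : (t : ℕ) → (Fin (t + 1) → (X → ℕ)) → X → U,
      (∑ m ∈ Mspace X n, (∑ x ∈ Hset n m, iid n PX x).toReal * V n T PW f ℓ 0 m)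
        ≤ Jhat n T PX PW f ℓ ψ) ∧
    (∀ ψstar : ℕ → (X → ℕ) → X → U,
      (∀ t < T, ∀ m ∈ Mspace X n,
        V n T PW f ℓ t m = lhat n ℓ t m (ψstar t m) +
          ∑ m' ∈ Mspace X n,
            (That n PW f t m (ψstar t m) m').toReal * V n T PW f ℓ (t + 1) m') →
      Jhat n T PX PW f ℓ (fun t zs => ψstar t (zs (Fin.last t)))
        = ∑ m ∈ Mspace X n, (∑ x ∈ Hset n m, iid n PX x).toReal * V n T PW f ℓ 0 m) :=
  stmt7_general n T PX PW f ℓ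
end

section
/- (Inductive step of Lemma 2, standalone form.) Let 𝒳 and 𝒲 be finite types, n ∈ ℕ, let m : 𝒳 → ℕ be a count vector with ∑_a m(a) = n and H(m) nonempty, let ν be a PMF on 𝒲, and let F : 𝒳 → 𝒲 → 𝒳. Let μ' be the law of the profile X' = (i ↦ F(X i)(W i)), where X is uniform on H(m) and W : Fin n → 𝒲 has i.i.d. coordinates of PMF ν, independent of X. Then for every count vector m' with μ'(H(m')) > 0, the conditional distribution of X' given the event {emp(X') = m'} is the uniform distribution on H(m'): for every x' ∈ H(m'), μ'(x') / μ'(H(m')) = 1 / |H(m')|. -/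
/-!
Relabelling the coordinates of a profile changes neither its empirical count vector nor the
probability of an i.i.d. noise vector, and `F` acts coordinatewise; hence the law `μ'` of `X'` is
exchangeable. Two profiles with the same empirical count vector differ by a permutation of
coordinates, so `μ'` is constant on each `H(m')`, and conditioning on `H(m')` gives the uniform law.
-/

open scoped ENNReal

open Finset Function

namespace PMF

variable {α β : Type*}

theorem map_apply_of_injective (p : PMF α) {f : α → β} (hf : Injective f) (a : α) :
    p.map f (f a) = p a := by
  rw [map_apply, tsum_eq_single a] <;> simp +contextual [hf.eq_iff, eq_comm]

theorem map_eq_self_of_bijective (p : PMF α) {f : α → α} (hf : Bijective f)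
    (h : ∀ a, p (f a) = p a) : p.map f = p := by
  ext b
  obtain ⟨a, rfl⟩ := hf.surjective b
  rw [map_apply_of_injective p hf.injective, h]

section Exchangeable

variable {ι : Type*}

theorem bijective_comp_perm (σ : Equiv.Perm ι) : Bijective fun x : ι → α => x ∘ σ :=
  (σ.symm.arrowCongr (Equiv.refl α)).bijective

def IsExchangeable (p : PMF (ι → α)) : Prop :=
  ∀ σ : Equiv.Perm ι, p.map (· ∘ σ) = p

theorem isExchangeable_of_apply_comp_perm {p : PMF (ι → α)}
    (h : ∀ (σ : Equiv.Perm ι) x, p (x ∘ σ) = p x) : p.IsExchangeable := fun σ =>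
  p.map_eq_self_of_bijective (bijective_comp_perm σ) (h σ)

theorem IsExchangeable.apply_comp_perm {p : PMF (ι → α)} (hp : p.IsExchangeable)
    (σ : Equiv.Perm ι) (x : ι → α) : p (x ∘ σ) = p x := by
  conv_lhs => rw [← hp σ]
  exact p.map_apply_of_injective (bijective_comp_perm σ).injective x

theorem IsExchangeable.bind {p : PMF (ι → α)} (hp : p.IsExchangeable)
    {κ : (ι → α) → PMF (ι → β)} (hκ : ∀ (σ : Equiv.Perm ι) x, (κ x).map (· ∘ σ) = κ (x ∘ σ)) :
    (p.bind κ).IsExchangeable := fun σ => by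
  rw [map_bind]
  simp_rw [hκ σ]
  conv_rhs => rw [← hp σ]
  rw [bind_map]
  rfl

theorem IsExchangeable.map_coordwise_comp_perm {γ : Type*} {q : PMF (ι → β)}
    (hq : q.IsExchangeable) (F : α → β → γ) (σ : Equiv.Perm ι) (x : ι → α) :
    (q.map fun w i => F (x i) (w i)).map (· ∘ σ) = q.map fun w i => F ((x ∘ σ) i) (w i) := by
  conv_rhs => rw [← hq σ]
  simp only [map_comp]
  rfl

end Exchangeable

end PMF

open PMF

theorem emp_comp_perm {X : Type*} [DecidableEq X] {n : ℕ} (x : Fin n → X)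
    (σ : Equiv.Perm (Fin n)) : emp (x ∘ σ) = emp x := by
  funext a
  exact card_bij' (fun i _ => σ i) (fun j _ => σ.symm j) (by simp) (by simp) (by simp) (by simp)

theorem exists_perm_comp_eq_of_emp_eq {X : Type*} [DecidableEq X] {n : ℕ} {x y : Fin n → X}
    (h : emp x = emp y) : ∃ σ : Equiv.Perm (Fin n), x ∘ σ = y := by
  have hfiber (a : X) : Fintype.card {i // y i = a} = Fintype.card {i // x i = a} := by
    simp only [Fintype.card_subtype]
    exact (congrFun h a).symm
  exact ⟨Equiv.ofFiberEquiv fun a => Fintype.equivOfCardEq (hfiber a),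
    funext (Equiv.ofFiberEquiv_map _)⟩

theorem isExchangeable_uniformOfFinset_Hset {X : Type*} [Fintype X] [DecidableEq X] {n : ℕ}
    (m : X → ℕ) (hne : (Hset n m).Nonempty) :
    (uniformOfFinset (Hset n m) hne).IsExchangeable :=
  isExchangeable_of_apply_comp_perm fun σ x => by
    simp only [uniformOfFinset_apply, Hset, mem_filter, mem_univ, true_and, emp_comp_perm]

theorem isExchangeable_iid {W : Type*} [Fintype W] (n : ℕ) (ν : PMF W) :
    (iid n ν).IsExchangeable :=
  isExchangeable_of_apply_comp_perm fun σ w => Equiv.prod_comp σ fun i => ν (w i)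

theorem PMF.IsExchangeable.apply_div_sum_Hset {X : Type*} [Fintype X] [DecidableEq X] {n : ℕ}
    {μ : PMF (Fin n → X)} (hμ : μ.IsExchangeable) {m' : X → ℕ}
    (hpos : 0 < ∑ y ∈ Hset n m', μ y) {x' : Fin n → X} (hx' : x' ∈ Hset n m') :
    μ x' / ∑ y ∈ Hset n m', μ y = 1 / (#(Hset n m') : ℝ≥0∞) := by
  have hconst : ∀ y ∈ Hset n m', μ y = μ x' := fun y hy => by
    have hemp : emp x' = emp y := by
      simp only [Hset, mem_filter] at hx' hy
      rw [hx'.2, hy.2]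
    obtain ⟨σ, rfl⟩ := exists_perm_comp_eq_of_emp_eq hemp
    exact hμ.apply_comp_perm σ x'
  rw [sum_congr rfl hconst, sum_const, nsmul_eq_mul] at hpos ⊢
  simpa using ENNReal.mul_div_mul_right 1 _ (right_ne_zero_of_mul hpos.ne') (apply_ne_top μ x')

theorem stmt15_general {X W : Type*} [Fintype X] [DecidableEq X] [Fintype W] {n : ℕ}
    (m : X → ℕ) (hne : (Hset n m).Nonempty)
    (ν : PMF W) (F : X → W → X)
    (μ' : PMF (Fin n → X))
    (hμ' : μ' = (PMF.uniformOfFinset (Hset n m) hne).bind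
        (fun x => (iid n ν).map (fun w => fun i => F (x i) (w i)))) :
    ∀ m' : X → ℕ, 0 < ∑ y ∈ Hset n m', μ' y →
      ∀ x' ∈ Hset n m', μ' x' / (∑ y ∈ Hset n m', μ' y) = 1 / ((Hset n m').card : ℝ≥0∞) := by
  intro m' hpos x' hx'
  have hμ'_exch : μ'.IsExchangeable := by
    rw [hμ']
    exact (isExchangeable_uniformOfFinset_Hset m hne).bind
      ((isExchangeable_iid n ν).map_coordwise_comp_perm F)
  exact hμ'_exch.apply_div_sum_Hset hpos hx'

/-- Inductive step of Lemma 2: if `X` is uniform on `H(m)` and `X' = (i ↦ F (X i) (W i))` with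
`W` an independent i.i.d. noise vector, then the conditional law of `X'` given `emp X' = m'`
(whenever this event has positive probability) is uniform on `H(m')`. -/
theorem stmt15 {X W : Type*} [Fintype X] [DecidableEq X] [Fintype W] {n : ℕ}
    (m : X → ℕ) (hm : ∑ a, m a = n) (hne : (Hset n m).Nonempty)
    (ν : PMF W) (F : X → W → X)
    (μ' : PMF (Fin n → X))
    (hμ' : μ' = (PMF.uniformOfFinset (Hset n m) hne).bind
        (fun x => (iid n ν).map (fun w => fun i => F (x i) (w i)))) :
    ∀ m' : X → ℕ, 0 < ∑ y ∈ Hset n m', μ' y →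
      ∀ x' ∈ Hset n m', μ' x' / (∑ y ∈ Hset n m', μ' y) = 1 / ((Hset n m').card : ℝ≥0∞) :=
  stmt15_general m hne ν F μ' hμ'
end
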